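/- arXiv:1006.4491 — 2 statements merged into one kernel-verified Lean document; each statement's English description precedes it below -/
import Mathlib

section
/- Let μ be an atomless Borel probability measure on the circle S¹ = ℝ/ℤ and let v : S¹ → ℝ be a Borel measurable function. Then for all but countably many values of t ∈ [0,1], the push-forward measure (Id + t·v)_# μ has no atom. -/
/-!
If `x + t v(x) = a` and `x + t' v(x) = b` with `t ≠ t'`, then `(t - t') v(x) ≡ a - b` modulo
the period, so `v(x)`, and with it `x = a - t v(x)`, ranges over a countable set. Since `μ` has no
atoms, fibres of the maps `x ↦ x + t v(x)` belonging to distinct parameters are therefore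
`μ`-almost disjoint, and an s-finite measure has only countably many almost disjoint sets of
positive measure.
-/

open MeasureTheory

theorem MeasureTheory.Measure.countable_setOf_map_singleton_ne_zero {ι α β : Type*}
    [MeasurableSpace α] [MeasurableSpace β] [MeasurableSingletonClass β]
    (μ : Measure α) [SFinite μ] {f : ι → α → β} (hf : ∀ i, Measurable (f i))
    (hdisj : ∀ i j, i ≠ j → ∀ a b, AEDisjoint μ (f i ⁻¹' {a}) (f j ⁻¹' {b})) :
    {i | ∃ s, μ.map (f i) {s} ≠ 0}.Countable := by
  set T := {i | ∃ s, μ.map (f i) {s} ≠ 0}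
  choose s hs using fun i : T => i.2
  have hpos : {i : T | 0 < μ (f i ⁻¹' {s i})} = Set.univ :=
    Set.eq_univ_of_forall fun i => by
      simpa [pos_iff_ne_zero, Measure.map_apply (hf i) (measurableSet_singleton _)] using hs i
  have hcount := countable_meas_pos_of_disjoint_iUnion₀ (μ := μ)
    (As := fun i : T => f i ⁻¹' {s i})
    (fun i => ((hf i) (measurableSet_singleton _)).nullMeasurableSet)
    (fun i j hij => hdisj i j (Subtype.coe_injective.ne hij) _ _)
  rw [hpos, Set.countable_univ_iff] at hcount
  exact Set.countable_coe_iff.mp hcount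

namespace AddCircle

variable {p : ℝ}

theorem countable_setOf_coe_mul_eq {r : ℝ} (hr : r ≠ 0) (c : AddCircle p) :
    {y : ℝ | ((r * y : ℝ) : AddCircle p) = c}.Countable := by
  obtain ⟨c, rfl⟩ := QuotientAddGroup.mk_surjective c
  refine (Set.countable_range fun n : ℤ => (c + n • p) / r).mono fun y hy => ?_
  have hy : ((r * y - c : ℝ) : AddCircle p) = 0 := by
    rw [QuotientAddGroup.mk_sub, sub_eq_zero]; exact hy
  obtain ⟨n, hn⟩ := (coe_eq_zero_iff p).mp hy
  exact ⟨n, by field_simp; linarith⟩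

theorem countable_preimage_inter_preimage_add_coe_mul {t t' : ℝ} (htt' : t ≠ t')
    (v : AddCircle p → ℝ) (a b : AddCircle p) :
    ((fun x => x + ((t * v x : ℝ) : AddCircle p)) ⁻¹' {a} ∩
      (fun x => x + ((t' * v x : ℝ) : AddCircle p)) ⁻¹' {b}).Countable := by
  refine ((countable_setOf_coe_mul_eq (sub_ne_zero.mpr htt') (a - b)).image
    fun y => a - ((t * y : ℝ) : AddCircle p)).mono ?_
  rintro x ⟨hxa, hxb⟩
  simp only [Set.mem_preimage, Set.mem_singleton_iff] at hxa hxb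
  refine ⟨v x, ?_, by simp [← hxa]⟩
  show (((t - t') * v x : ℝ) : AddCircle p) = a - b
  rw [sub_mul, QuotientAddGroup.mk_sub, ← hxa, ← hxb]
  abel

theorem countable_setOf_map_add_coe_mul_singleton_ne_zero (μ : Measure (AddCircle p))
    [SFinite μ] [NullSingletonClass μ] {v : AddCircle p → ℝ} (hv : Measurable v) :
    {t : ℝ | ∃ s, (μ.map fun x => x + ((t * v x : ℝ) : AddCircle p)) {s} ≠ 0}.Countable :=
  μ.countable_setOf_map_singleton_ne_zero
    (fun _ => measurable_id.add (AddCircle.measurable_mk'.comp (measurable_const.mul hv)))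
    fun _ _ htt' a b => (countable_preimage_inter_preimage_add_coe_mul htt' v a b).measure_zero μ

end AddCircle

/-- For an atomless Borel probability measure `μ` on the circle and a Borel
measurable `v : S¹ → ℝ`, for all but countably many `t ∈ [0,1]` the push-forward
of `μ` by `x ↦ x + t·v(x)` has no atom. -/
theorem atomless_pushforward_countable_exceptions
    (μ : Measure UnitAddCircle) [IsProbabilityMeasure μ] [NullSingletonClass μ]
    (v : UnitAddCircle → ℝ) (hv : Measurable v) :
    Set.Countable {t ∈ Set.Icc (0 : ℝ) 1 |
      ¬ ∀ s : UnitAddCircle,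
        (μ.map fun x => x + ((t * v x : ℝ) : UnitAddCircle)) {s} = 0} :=
  (AddCircle.countable_setOf_map_add_coe_mul_singleton_ne_zero μ hv).mono
    fun _ ht => not_forall.mp ht.2
end

section
/- Let λ be Haar measure on ℝ/ℤ, d ≥ 2 an integer, and v ∈ L²(λ). Then (Φ_d)_#((Id + t·v)_# λ) = (1/d) Σ_{j=0}^{d−1} (Id + d·t·v_j)_# λ, where Φ_d(x) = dx and v_j(x) = v((x+j)/d). -/
open MeasureTheory
open scoped ENNReal

instance : Fact ((0 : ℝ) < 1) := ⟨one_pos⟩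

/-- The canonical lift of a point of the circle `ℝ/ℤ` to `[0,1)`. -/
noncomputable def circleLift (x : UnitAddCircle) : ℝ :=
  (AddCircle.equivIco 1 0 x : ℝ)

/-!
Lebesgue measure on `ℝ/ℤ` is the average of its images under the `d` inverse branches
`x ↦ (x + j)/d` of `Φ_d`: on the lift `[0,1)` the `j`-th branch is an affine map onto
`[j/d, (j+1)/d)` contracting by `d`, and these intervals tile `[0,1)`. Since
`Φ_d ∘ (Id + t·v) = Φ_d + d·t·v` and `Φ_d` undoes every branch, pushing this decomposition
forward by `Φ_d + d·t·v` gives the theorem.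
-/

open Set

lemma measurable_circleLift : Measurable circleLift :=
  measurable_subtype_coe.comp (AddCircle.measurableEquivIco 1 0).measurable

@[simp]
lemma coe_circleLift (x : UnitAddCircle) : ((circleLift x : ℝ) : UnitAddCircle) = x :=
  AddCircle.coe_equivIco

lemma circleLift_coe {r : ℝ} (hr : r ∈ Ico (0 : ℝ) 1) : circleLift r = r :=
  AddCircle.equivIco_coe_of_mem (by rwa [zero_add])

lemma UnitAddCircle.volume_eq_map_coe_restrict_Ico :
    (volume : Measure UnitAddCircle) = (volume.restrict (Ico (0 : ℝ) 1)).map (↑) := by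
  have h := (UnitAddCircle.measurePreserving_mk 0).map_eq
  rw [zero_add] at h
  rw [Measure.restrict_congr_set Ico_ae_eq_Ioc, h]

lemma MeasureTheory.Measure.sum_restrict_Ico_of_monotone {α : Type*} [LinearOrder α]
    [TopologicalSpace α] [OrderClosedTopology α] [MeasurableSpace α] [OpensMeasurableSpace α]
    (μ : Measure α) {a : ℕ → α} (ha : Monotone a) (n : ℕ) :
    ∑ j ∈ Finset.range n, μ.restrict (Ico (a j) (a (j + 1))) = μ.restrict (Ico (a 0) (a n)) := by
  induction n with
  | zero => simp
  | succ n ih =>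
    rw [Finset.sum_range_succ, ih,
      ← Measure.restrict_union Ico_disjoint_Ico_same measurableSet_Ico,
      Ico_union_Ico_eq_Ico (ha n.zero_le) (ha n.le_succ)]

lemma Real.map_add_const_div_restrict_Ico {a : ℝ} (ha : 0 < a) (c b e : ℝ) :
    (volume.restrict (Ico b e)).map (fun r => (r + c) / a)
      = ENNReal.ofReal a • volume.restrict (Ico ((b + c) / a) ((e + c) / a)) := by
  have hmeas : Measurable fun r : ℝ => (r + c) / a := (measurable_add_const c).div_const a
  have hmap : volume.map (fun r : ℝ => (r + c) / a) = ENNReal.ofReal a • volume := by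
    have : (fun r : ℝ => (r + c) / a) = (a⁻¹ * ·) ∘ (· + c) := by
      funext r; simp [div_eq_inv_mul]
    rw [this, ← Measure.map_map (measurable_const_mul _) (measurable_add_const _),
      map_add_right_eq_self, Real.map_volume_mul_left (inv_ne_zero ha.ne'), inv_inv, abs_of_pos ha]
  have hpre : (fun r => (r + c) / a) ⁻¹' Ico ((b + c) / a) ((e + c) / a) = Ico b e := by
    ext r
    simp [div_le_div_iff_of_pos_right ha, div_lt_div_iff_of_pos_right ha]
  rw [← hpre, ← Measure.restrict_map hmeas measurableSet_Ico, hmap, Measure.restrict_smul]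

/-- The paper's `v_j` is `v ∘ circleBranch d j`. -/
noncomputable def circleBranch (d j : ℕ) (x : UnitAddCircle) : UnitAddCircle :=
  (((circleLift x + j) / d : ℝ) : UnitAddCircle)

lemma measurable_circleBranch (d j : ℕ) : Measurable (circleBranch d j) :=
  AddCircle.measurable_mk'.comp ((measurable_circleLift.add_const _).div_const _)

lemma nsmul_circleBranch {d : ℕ} (hd : d ≠ 0) (j : ℕ) (x : UnitAddCircle) :
    d • circleBranch d j x = x := by
  rw [circleBranch, ← AddCircle.coe_nsmul, nsmul_eq_mul, mul_div_cancel₀ _ (by positivity),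
    AddCircle.coe_add, coe_circleLift, add_eq_left]
  exact (AddCircle.coe_eq_zero_iff 1).2 ⟨j, by simp⟩

lemma map_circleBranch_volume {d : ℕ} (hd : d ≠ 0) (j : ℕ) :
    volume.map (circleBranch d j)
      = ENNReal.ofReal d • (volume.restrict (Ico ((j : ℝ) / d) ((j + 1 : ℕ) / d))).map (↑) := by
  have hd' : (0 : ℝ) < d := by positivity
  have hlift : circleBranch d j ∘ (↑) =ᵐ[volume.restrict (Ico (0 : ℝ) 1)]
      (↑) ∘ fun r : ℝ => (r + j) / d := by
    filter_upwards [ae_restrict_mem measurableSet_Ico] with r hr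
    simp [circleBranch, circleLift_coe hr]
  rw [UnitAddCircle.volume_eq_map_coe_restrict_Ico,
    Measure.map_map (measurable_circleBranch d j) AddCircle.measurable_mk', Measure.map_congr hlift,
    ← Measure.map_map AddCircle.measurable_mk' ((measurable_add_const _).div_const _),
    Real.map_add_const_div_restrict_Ico hd', Measure.map_smul, zero_add, add_comm (1 : ℝ),
    Nat.cast_succ]

lemma UnitAddCircle.volume_eq_smul_sum_map_circleBranch {d : ℕ} (hd : d ≠ 0) :
    (volume : Measure UnitAddCircle)
      = (d : ℝ≥0∞)⁻¹ • ∑ j ∈ Finset.range d, volume.map (circleBranch d j) := by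
  have hmono : Monotone fun j : ℕ => (j : ℝ) / d := fun i j hij =>
    div_le_div_of_nonneg_right (Nat.cast_le.2 hij) d.cast_nonneg
  rw [Finset.sum_congr rfl fun j _ => map_circleBranch_volume hd j, ← Finset.smul_sum,
    ← Measure.map_finset_sum AddCircle.measurable_mk'.aemeasurable,
    Measure.sum_restrict_Ico_of_monotone volume hmono, Nat.cast_zero, zero_div,
    div_self (Nat.cast_ne_zero.2 hd), ← UnitAddCircle.volume_eq_map_coe_restrict_Ico, smul_smul,
    ENNReal.ofReal_natCast,
    ENNReal.inv_mul_cancel (Nat.cast_ne_zero.2 hd) (ENNReal.natCast_ne_top d), one_smul]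

theorem pushforward_model_branch_decomposition_general
    (d : ℕ) (hd : 2 ≤ d) (t : ℝ) (v : UnitAddCircle → ℝ) (hv : Measurable v) :
    ((volume : Measure UnitAddCircle).map
        fun x => x + ((t * v x : ℝ) : UnitAddCircle)).map (fun x => d • x)
      = (d : ℝ≥0∞)⁻¹ • ∑ j ∈ Finset.range d,
          (volume : Measure UnitAddCircle).map
            fun x => x + ((d * t * v ((((circleLift x + j) / d : ℝ)) : UnitAddCircle) : ℝ)
              : UnitAddCircle) := by
  have hd0 : d ≠ 0 := by omega
  have hvt (c : ℝ) : Measurable fun x => ((c * v x : ℝ) : UnitAddCircle) :=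
    AddCircle.measurable_mk'.comp (hv.const_mul c)
  set F : UnitAddCircle → UnitAddCircle := fun x => d • x + ((d * t * v x : ℝ) : UnitAddCircle)
  have hF : Measurable F := (continuous_nsmul d).measurable.add (hvt _)
  have hshift : Measurable fun x : UnitAddCircle => x + ((t * v x : ℝ) : UnitAddCircle) :=
    measurable_id.add (hvt t)
  have hlhs : (fun x : UnitAddCircle => d • x) ∘ (fun x => x + ((t * v x : ℝ) : UnitAddCircle))
      = F := by
    funext x
    simp only [Function.comp, F, smul_add, ← AddCircle.coe_nsmul, nsmul_eq_mul, mul_assoc]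
  have hbranch (j : ℕ) : F ∘ circleBranch d j
      = fun x => x + ((d * t * v (circleBranch d j x) : ℝ) : UnitAddCircle) := by
    funext x
    simp only [Function.comp, F, nsmul_circleBranch hd0]
  calc _ = volume.map F := by
        rw [Measure.map_map (continuous_nsmul d).measurable hshift, hlhs]
    _ = (d : ℝ≥0∞)⁻¹ • ∑ j ∈ Finset.range d, (volume.map (circleBranch d j)).map F := by
        conv_lhs => rw [UnitAddCircle.volume_eq_smul_sum_map_circleBranch hd0]
        rw [Measure.map_smul, Measure.map_finset_sum hF.aemeasurable]
    _ = _ := by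
        simp only [Measure.map_map hF (measurable_circleBranch d _), hbranch]
        rfl

/-- Pushing `λ + tv` forward by the degree `d` covering decomposes as the average
over the `d` branches: `(Φ_d)_#((Id+tv)_#λ) = (1/d) Σ_j (Id + d·t·v_j)_# λ` with
`v_j(x) = v((x+j)/d)`. -/
theorem pushforward_model_branch_decomposition
    (d : ℕ) (hd : 2 ≤ d) (t : ℝ) (v : UnitAddCircle → ℝ) (hv : Measurable v)
    (hv2 : MemLp v 2 (volume : Measure UnitAddCircle)) :
    ((volume : Measure UnitAddCircle).map
        fun x => x + ((t * v x : ℝ) : UnitAddCircle)).map (fun x => d • x)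
      = (d : ℝ≥0∞)⁻¹ • ∑ j ∈ Finset.range d,
          (volume : Measure UnitAddCircle).map
            fun x => x + ((d * t * v ((((circleLift x + j) / d : ℝ)) : UnitAddCircle) : ℝ)
              : UnitAddCircle) :=
  pushforward_model_branch_decomposition_general d hd t v hv
end
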